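/- arXiv:1504.00508 — 3 statements merged into one kernel-verified Lean document; each statement's English description precedes it below -/
import Mathlib

section
/- Let F be a field of characteristic 2 and g, h ∈ F[x] with h ≠ 0 and gcd(h, h', g') = 1. Then every singular point (a,b) of the affine curve y² + h(x)y = g(x) over the algebraic closure of F satisfies h'(a) ≠ 0, i.e., is an ordinary double point (the tangent cone quadratic form is nondegenerate). -/
open Polynomial

/-- If `h ≠ 0` and `gcd(h, h', g') = 1` in characteristic 2, every singular point of
`y² + h(x)y = g(x)` over the algebraic closure satisfies `h'(a) ≠ 0`. -/
theorem stmt2 (F : Type) [Field F] [CharP F 2] (g h : F[X])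
    (hh : h ≠ 0)
    (hgcd : ∀ c : F[X], c ∣ h → c ∣ h.derivative → c ∣ g.derivative → IsUnit c) :
    ∀ a b : AlgebraicClosure F,
      b ^ 2 + Polynomial.aeval a h * b = Polynomial.aeval a g →
      Polynomial.aeval a h = 0 →
      Polynomial.aeval a h.derivative * b = Polynomial.aeval a g.derivative →
      Polynomial.aeval a h.derivative ≠ 0 := by
  intro a b _ hha h3 hd
  have hg' : Polynomial.aeval a g.derivative = 0 := by rw [← h3, hd, zero_mul]
  exact (minpoly.not_isUnit F a) (hgcd _ (minpoly.dvd F a hha) (minpoly.dvd F a hd)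
    (minpoly.dvd F a hg'))
end

section
/- Let F be a perfect field of characteristic 2, and g, h ∈ F[x] with h ≠ 0 and gcd(h, h', g') = 1. Set r := gcd(h, (h')²·g + (g')²). Then r is a separable polynomial (all its roots in the algebraic closure are simple), and h/r is coprime to r. -/
open Polynomial

/- For `r := gcd(h, (h')²g + (g')²)` over a perfect field of characteristic 2,
under the semistability hypotheses, `r` is separable and `h/r` is prime to `r`. -/
open scoped Classical in
theorem stmt3 (F : Type) [Field F] [PerfectField F] [CharP F 2] (g h : F[X])
    (hh : h ≠ 0)
    (hgcd : ∀ c : F[X], c ∣ h → c ∣ h.derivative → c ∣ g.derivative → IsUnit c) :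
    (gcd h (h.derivative ^ 2 * g + g.derivative ^ 2)).Separable ∧
      IsCoprime (h / gcd h (h.derivative ^ 2 * g + g.derivative ^ 2))
        (gcd h (h.derivative ^ 2 * g + g.derivative ^ 2)) := by
  set s := h.derivative ^ 2 * g + g.derivative ^ 2 with hs
  set r := gcd h s with hrdef
  have hrh : r ∣ h := gcd_dvd_left h s
  have hrs : r ∣ s := gcd_dvd_right h s
  have hr0 : r ≠ 0 := by
    intro h0
    exact hh ((gcd_eq_zero_iff h s).mp h0).1
  -- key: no irreducible p divides r and h'
  have key : ∀ p : F[X], Irreducible p → p ∣ r → p ∣ h.derivative → False := by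
    intro p hp hpr hph'
    have hph : p ∣ h := hpr.trans hrh
    have hps : p ∣ s := hpr.trans hrs
    have h1 : p ∣ h.derivative ^ 2 * g := dvd_mul_of_dvd_left (dvd_pow hph' two_ne_zero) g
    have h2 : p ∣ g.derivative ^ 2 := by
      have := dvd_sub hps h1
      simpa [hs] using this
    have h3 : p ∣ g.derivative := hp.prime.dvd_of_dvd_pow h2
    exact hp.not_isUnit (hgcd p hph hph' h3)
  constructor
  · -- Separable r : IsCoprime r r.derivative
    rw [Polynomial.Separable]
    rw [← gcd_isUnit_iff]
    by_contra hu
    have hg0 : gcd r r.derivative ≠ 0 := fun h0 => hr0 ((gcd_eq_zero_iff _ _).mp h0).1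
    obtain ⟨p, hp, hpd⟩ := WfDvdMonoid.exists_irreducible_factor hu hg0
    have hpr : p ∣ r := hpd.trans (gcd_dvd_left _ _)
    have hpr' : p ∣ r.derivative := hpd.trans (gcd_dvd_right _ _)
    obtain ⟨u, hu'⟩ := hrh
    have hph' : p ∣ h.derivative := by
      rw [hu', derivative_mul]
      exact dvd_add (dvd_mul_of_dvd_left hpr' u) (dvd_mul_of_dvd_left hpr _)
    exact key p hp hpr hph'
  · rw [← gcd_isUnit_iff]
    by_contra hu
    have hg0 : gcd (h / r) r ≠ 0 := fun h0 => hr0 ((gcd_eq_zero_iff _ _).mp h0).2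
    obtain ⟨p, hp, hpd⟩ := WfDvdMonoid.exists_irreducible_factor hu hg0
    have hpq : p ∣ h / r := hpd.trans (gcd_dvd_left _ _)
    have hpr : p ∣ r := hpd.trans (gcd_dvd_right _ _)
    have hmul : r * (h / r) = h := EuclideanDomain.mul_div_cancel' hr0 hrh
    obtain ⟨a, ha⟩ := id hpr
    obtain ⟨b, hb⟩ := id hpq
    have hph' : p ∣ h.derivative := by
      rw [← hmul, hb, ha, derivative_mul]
      exact dvd_add (dvd_mul_of_dvd_right (dvd_mul_right p b) _)
        (dvd_mul_of_dvd_left (dvd_mul_right p a) _)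
    exact key p hp hpr hph'
end

section
/- Let F be a perfect field of characteristic 2 and r ∈ F[x] a separable polynomial. For any g ∈ F[x] there exists s ∈ F[x] such that s² ≡ g (mod r). -/
open Polynomial

lemma sqdec (F : Type) [Field F] [PerfectField F] [CharP F 2] (g : F[X]) :
    ∃ A B : F[X], g = A ^ 2 + B ^ 2 * X := by
  have h2 : (2 : F[X]) = 0 := by exact_mod_cast CharP.cast_eq_zero F[X] 2
  have hsq : ∀ c : F, ∃ d : F, d ^ 2 = c := fun c => by
    obtain ⟨d, hd⟩ := (bijective_frobenius F 2).2 c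
    exact ⟨d, by simpa [frobenius_def] using hd⟩
  suffices H : ∀ n : ℕ, ∀ g : F[X], g.natDegree = n → ∃ A B : F[X], g = A ^ 2 + B ^ 2 * X from
    H g.natDegree g rfl
  clear g
  intro n
  induction n using Nat.strong_induction_on with
  | _ n ih =>
    intro g hn
    rcases eq_or_ne n 0 with rfl | hn0
    · obtain ⟨d, hd⟩ := hsq (g.coeff 0)
      refine ⟨C d, 0, ?_⟩
      rw [Polynomial.eq_C_of_natDegree_eq_zero hn]
      have : (C d) ^ 2 = C (g.coeff 0) := by rw [← map_pow, hd]
      rw [this]; ring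
    · have hg0 : g ≠ 0 := fun h => hn0 (by simp [h] at hn; omega)
      have hlt : (divX g).natDegree < n := by
        rw [Polynomial.natDegree_divX_eq_natDegree_tsub_one, hn]
        omega
      obtain ⟨A', B', hA⟩ := ih _ hlt (divX g) rfl
      obtain ⟨d, hd⟩ := hsq (g.coeff 0)
      have hdC : (C d) ^ 2 = C (g.coeff 0) := by rw [← map_pow, hd]
      have hh : divX g * X + C (g.coeff 0) = g := Polynomial.divX_mul_X_add g
      refine ⟨C d + B' * X, A', ?_⟩
      linear_combination (-1 : F[X]) * hh + X * hA + (-1 : F[X]) * hdC +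
        (-(C d) * B' * X) * h2

/-- Over a perfect field of characteristic 2, for every separable `r` and every `g`
there is `s` with `s² ≡ g (mod r)`. -/
theorem stmt4 (F : Type) [Field F] [PerfectField F] [CharP F 2]
    (r : F[X]) (hr : r.Separable) :
    ∀ g : F[X], ∃ s : F[X], r ∣ g - s ^ 2 := by
  intro g
  have h2 : (2 : F[X]) = 0 := by exact_mod_cast CharP.cast_eq_zero F[X] 2
  obtain ⟨P, Q, hrd⟩ := sqdec F r
  obtain ⟨A, B, hg⟩ := sqdec F g
  -- derivative of r is Q^2
  have hder : derivative r = Q ^ 2 := by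
    rw [hrd]
    simp only [derivative_add, derivative_mul, derivative_X, derivative_pow, Nat.cast_ofNat, map_ofNat]
    linear_combination (P * derivative P + Q * derivative Q * X) * h2
  obtain ⟨u, v, hbez⟩ := hr
  rw [hder] at hbez
  refine ⟨A + B * P * v * Q, B ^ 2 * X * u ^ 2 * r - B ^ 2 * v ^ 2 * Q ^ 2, ?_⟩
  linear_combination hg + (B ^ 2 * v ^ 2 * Q ^ 2) * hrd +
    (B ^ 2 * X * (v * Q ^ 2 + 1 - u * r)) * hbez +
    (B ^ 2 * X - A * B * P * v * Q - B ^ 2 * X * u * r) * h2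
end
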